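/- Let p_1, …, p_n ∈ ℂ with Re p_i > 0 for all i, and let A_1, …, A_n be m×m complex matrices. Then (1/(2π)) ∫_{−∞}^{∞} ‖Σ_{i=1}^n (2 Re p_i/(iω − p_i)) · A_i‖_F² dω = Σ_{i=1}^n Σ_{j=1}^n (4 Re p_i · Re p_j / (conj(p_i) + p_j)) · Tr(A_i^H A_j). (Matrix version of the pole quadratic form; this is the evaluation yielding the expression J₂* = Σ_{i,j} (4Re(p_i)Re(p_j)/(p̄_i + p_j)) h_i^H f_i^H f_j h_j g_j^H g_i in Theorem 2.) -/

import Mathlib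

/-!
Expanding the Frobenius norm reduces the claim to
`∫ conj (iω - a)⁻¹ (iω - b)⁻¹ dω = 2π / (conj a + b)` for `Re a, Re b > 0`, that is, to
`∫ (ω - z₁)⁻¹ (ω - z₂)⁻¹ dω = 2πi / (z₁ - z₂)` with `z₁ = i conj a` in the upper and `z₂ = -i b`
in the lower half-plane. After partial fractions this is the fundamental theorem of calculus for
the branch `log |ω - z| + i arctan ((ω - Re z) / Im z)` of `log (ω - z)` along `ℝ`: as `ω` runs
from `-∞` to `+∞` the argument of `ω - z₁` increases by `π` and that of `ω - z₂` decreases by `π`,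
while the two log-moduli differ by `o(1)` at both ends.
-/

open Matrix MeasureTheory Filter Topology Complex ComplexConjugate

noncomputable def invSubPrimitive (z : ℂ) (ω : ℝ) : ℂ :=
  (Real.log (normSq (ω - z)) / 2 : ℝ) + I * (Real.arctan ((ω - z.re) / z.im) : ℝ)

lemma normSq_ofReal_sub (z : ℂ) (ω : ℝ) : normSq (ω - z) = (ω - z.re) ^ 2 + z.im ^ 2 := by
  simp only [normSq_apply, sub_re, ofReal_re, sub_im, ofReal_im, zero_sub, mul_neg, neg_mul,
    neg_neg]
  ring

lemma ofReal_sub_ne_zero {z : ℂ} (hz : z.im ≠ 0) (ω : ℝ) : (ω : ℂ) - z ≠ 0 :=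
  fun h => hz (by simpa using congrArg im h)

lemma hasDerivAt_invSubPrimitive {z : ℂ} (hz : z.im ≠ 0) (ω : ℝ) :
    HasDerivAt (invSubPrimitive z) ((ω : ℂ) - z)⁻¹ ω := by
  have hD : (ω - z.re) ^ 2 + z.im ^ 2 ≠ 0 := by positivity
  have hlog : HasDerivAt (fun ω : ℝ => Real.log (normSq (ω - z)) / 2)
      ((ω - z.re) / ((ω - z.re) ^ 2 + z.im ^ 2)) ω := by
    have hsq : HasDerivAt (fun ω : ℝ => (ω - z.re) ^ 2 + z.im ^ 2) (2 * (ω - z.re)) ω := by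
      simpa using (((hasDerivAt_id ω).sub_const z.re).pow 2).add_const (z.im ^ 2)
    simp only [normSq_ofReal_sub]
    refine ((hsq.log hD).div_const 2).congr_deriv ?_
    field_simp
  have harctan : HasDerivAt (fun ω : ℝ => Real.arctan ((ω - z.re) / z.im))
      (z.im / ((ω - z.re) ^ 2 + z.im ^ 2)) ω := by
    refine (((hasDerivAt_id ω).sub_const z.re).div_const z.im).arctan.congr_deriv ?_
    simp only [id]
    field_simp
    ring
  refine (hlog.ofReal_comp.add (harctan.ofReal_comp.const_mul I)).congr_deriv ?_
  simp only [Complex.ext_iff, add_re, add_im, ofReal_re, ofReal_im, mul_re, mul_im, I_re, I_im,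
    inv_re, inv_im, sub_re, sub_im, normSq_ofReal_sub]
  constructor <;> ring

-- Reflecting `ω ↦ -ω` turns the limit at `-∞` into one at `+∞`.
lemma invSubPrimitive_neg (z : ℂ) (ω : ℝ) :
    invSubPrimitive z (-ω) = conj (invSubPrimitive (-conj z) ω) := by
  have hnormSq : normSq ((-ω : ℝ) - z) = normSq (ω - -conj z) := by
    simp only [normSq_ofReal_sub, neg_re, neg_im, conj_re, conj_im]; ring
  have harg : (-ω - z.re) / z.im = -((ω - (-conj z).re) / (-conj z).im) := by
    simp only [neg_re, neg_im, conj_re, conj_im, neg_neg]; ring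
  rw [invSubPrimitive, invSubPrimitive, hnormSq, harg, Real.arctan_neg]
  simp only [map_add, map_mul, conj_I, conj_ofReal, ofReal_neg]
  ring

lemma tendsto_arctan_sub_div_atTop (x : ℝ) {y : ℝ} (hy : 0 < y) :
    Tendsto (fun ω : ℝ => Real.arctan ((ω - x) / y)) atTop (𝓝 (Real.pi / 2)) :=
  (Real.tendsto_arctan_atTop.mono_right nhdsWithin_le_nhds).comp
    ((tendsto_atTop_add_const_right _ (-x) tendsto_id).atTop_div_const hy)

lemma tendsto_log_normSq_sub_sub_atTop {z₁ z₂ : ℂ} (h₁ : z₁.im ≠ 0) (h₂ : z₂.im ≠ 0) :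
    Tendsto (fun ω : ℝ => Real.log (normSq (ω - z₁)) - Real.log (normSq (ω - z₂)))
      atTop (𝓝 0) := by
  have hinv : Tendsto (fun ω : ℝ => ((ω : ℂ) - z₂)⁻¹) atTop (𝓝 0) :=
    tendsto_inv₀_cobounded.comp
      ((tendsto_sub_const_cobounded z₂).comp (RCLike.tendsto_ofReal_atTop_cobounded ℂ))
  have hratio : Tendsto (fun ω : ℝ => ((ω : ℂ) - z₁) / (ω - z₂)) atTop (𝓝 1) := by
    convert (hinv.const_mul (z₂ - z₁)).const_add 1 using 2 with ω
    · field_simp [ofReal_sub_ne_zero h₂ ω]; ring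
    · simp
  convert ((Real.continuousAt_log (by simp)).tendsto.comp
    ((continuous_normSq.tendsto 1).comp hratio)) using 2 with ω
  · simp [Real.log_div, ofReal_sub_ne_zero h₁, ofReal_sub_ne_zero h₂]
  · simp

lemma tendsto_invSubPrimitive_sub_atTop {z₁ z₂ : ℂ} (h₁ : 0 < z₁.im) (h₂ : z₂.im < 0) :
    Tendsto (fun ω => invSubPrimitive z₁ ω - invSubPrimitive z₂ ω) atTop
      (𝓝 (Real.pi * I)) := by
  have hlog := (tendsto_log_normSq_sub_sub_atTop h₁.ne' h₂.ne).div_const 2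
  have harctan := (tendsto_arctan_sub_div_atTop z₁.re h₁).sub
    ((tendsto_arctan_sub_div_atTop z₂.re (neg_pos.2 h₂)).neg)
  simp only [div_neg, Real.arctan_neg] at harctan
  convert hlog.ofReal.add (harctan.ofReal.const_mul I) using 1
  · ext ω; simp only [invSubPrimitive]; push_cast; ring
  · congr 1; push_cast; ring

lemma tendsto_invSubPrimitive_sub_atBot {z₁ z₂ : ℂ} (h₁ : 0 < z₁.im) (h₂ : z₂.im < 0) :
    Tendsto (fun ω => invSubPrimitive z₁ ω - invSubPrimitive z₂ ω) atBot
      (𝓝 (-(Real.pi * I))) := by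
  have htop := tendsto_invSubPrimitive_sub_atTop (z₁ := -conj z₁) (z₂ := -conj z₂)
    (by simpa using h₁) (by simpa using h₂)
  convert ((continuous_conj.tendsto _).comp htop).comp tendsto_neg_atBot_atTop using 1
  · ext ω; simp [invSubPrimitive_neg]
  · simp

lemma integrable_inv_normSq_ofReal_sub {z : ℂ} (hz : z.im ≠ 0) :
    Integrable fun ω : ℝ => (normSq (ω - z))⁻¹ := by
  refine (((integrable_inv_one_add_sq.comp_div hz).comp_sub_right z.re).const_mul
    (z.im ^ 2)⁻¹).congr (Eventually.of_forall fun ω => ?_)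
  simp only [normSq_ofReal_sub]
  field_simp
  ring

lemma integrable_inv_sub_mul_inv_sub {z₁ z₂ : ℂ} (h₁ : z₁.im ≠ 0) (h₂ : z₂.im ≠ 0) :
    Integrable fun ω : ℝ => ((ω : ℂ) - z₁)⁻¹ * ((ω : ℂ) - z₂)⁻¹ := by
  refine (((integrable_inv_normSq_ofReal_sub h₁).add
    (integrable_inv_normSq_ofReal_sub h₂)).div_const 2).mono' (by fun_prop)
    (Eventually.of_forall fun ω => ?_)
  simp only [Pi.add_apply, norm_mul, norm_inv, normSq_eq_norm_sq, ← inv_pow]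
  linarith [two_mul_le_add_sq ‖(ω : ℂ) - z₁‖⁻¹ ‖(ω : ℂ) - z₂‖⁻¹]

lemma integral_inv_sub_mul_inv_sub {z₁ z₂ : ℂ} (h₁ : 0 < z₁.im) (h₂ : z₂.im < 0) :
    ∫ ω : ℝ, ((ω : ℂ) - z₁)⁻¹ * ((ω : ℂ) - z₂)⁻¹ = 2 * Real.pi * I / (z₁ - z₂) := by
  have hz : z₁ - z₂ ≠ 0 := sub_ne_zero.2 fun h => (h₂.trans h₁).ne' (by rw [h])
  have hpartial : ∀ ω : ℝ, ((ω : ℂ) - z₁)⁻¹ * ((ω : ℂ) - z₂)⁻¹ =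
      (z₁ - z₂)⁻¹ * (((ω : ℂ) - z₁)⁻¹ - ((ω : ℂ) - z₂)⁻¹) := fun ω => by
    have := ofReal_sub_ne_zero h₁.ne' ω
    have := ofReal_sub_ne_zero h₂.ne ω
    field_simp
    ring
  have hint : Integrable fun ω : ℝ => ((ω : ℂ) - z₁)⁻¹ - ((ω : ℂ) - z₂)⁻¹ := by
    refine ((integrable_inv_sub_mul_inv_sub h₁.ne' h₂.ne).const_mul (z₁ - z₂)).congr
      (Eventually.of_forall fun ω => ?_)
    simp only [hpartial, mul_inv_cancel_left₀ hz]
  have hftc := integral_of_hasDerivAt_of_tendsto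
    (fun ω => (hasDerivAt_invSubPrimitive h₁.ne' ω).sub (hasDerivAt_invSubPrimitive h₂.ne ω))
    hint (tendsto_invSubPrimitive_sub_atBot h₁ h₂) (tendsto_invSubPrimitive_sub_atTop h₁ h₂)
  simp only [hpartial]
  rw [integral_const_mul, hftc]
  field_simp
  ring

lemma conj_inv_I_mul_sub_mul_inv_I_mul_sub (a b : ℂ) (ω : ℝ) :
    conj (I * ω - a)⁻¹ * (I * ω - b)⁻¹ = ((ω : ℂ) - I * conj a)⁻¹ * ((ω : ℂ) - -(I * b))⁻¹ := by
  rw [map_inv₀, ← mul_inv, ← mul_inv]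
  congr 1
  simp only [map_sub, map_mul, conj_I, conj_ofReal]
  linear_combination (conj a * b - (ω : ℂ) ^ 2) * I_mul_I

lemma integrable_conj_inv_I_mul_sub_mul_inv_I_mul_sub {a b : ℂ} (ha : a.re ≠ 0) (hb : b.re ≠ 0) :
    Integrable fun ω : ℝ => conj (I * ω - a)⁻¹ * (I * ω - b)⁻¹ := by
  simp only [conj_inv_I_mul_sub_mul_inv_I_mul_sub]
  exact integrable_inv_sub_mul_inv_sub (by simpa using ha) (by simpa using hb)

lemma integral_conj_inv_I_mul_sub_mul_inv_I_mul_sub {a b : ℂ} (ha : 0 < a.re) (hb : 0 < b.re) :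
    ∫ ω : ℝ, conj (I * ω - a)⁻¹ * (I * ω - b)⁻¹ = 2 * Real.pi / (conj a + b) := by
  have hab : conj a + b ≠ 0 := ne_of_apply_ne re (by simpa using (add_pos ha hb).ne')
  simp only [conj_inv_I_mul_sub_mul_inv_I_mul_sub]
  rw [integral_inv_sub_mul_inv_sub (by simpa using ha) (by simpa using hb),
    show I * conj a - -(I * b) = I * (conj a + b) by ring]
  field_simp

lemma Matrix.trace_conjTranspose_sum_smul_mul_sum_smul {ι m n R : Type*} [Fintype ι]
    [Fintype m] [Fintype n] [CommSemiring R] [StarRing R] (c : ι → R) (A : ι → Matrix m n R) :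
    trace ((∑ i, c i • A i)ᴴ * ∑ i, c i • A i) =
      ∑ i, ∑ j, star (c i) * c j * trace ((A i)ᴴ * A j) := by
  simp only [Matrix.conjTranspose_sum, Matrix.conjTranspose_smul, Matrix.sum_mul, Matrix.mul_sum,
    Matrix.smul_mul, Matrix.mul_smul, Matrix.trace_sum, Matrix.trace_smul, smul_eq_mul,
    Finset.mul_sum]
  rw [Finset.sum_comm]
  exact Finset.sum_congr rfl fun i _ => Finset.sum_congr rfl fun j _ => by ring

/-- Matrix version of the pole quadratic form: for matrices `A_i` and `Re p_i > 0`,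
`(1/(2π)) ∫ ‖Σ_i (2 Re p_i/(iω - p_i)) A_i‖_F² dω
  = Σ_i Σ_j (4 Re p_i Re p_j/(conj p_i + p_j)) Tr(A_iᴴ A_j)`,
where `‖A‖_F² = Tr(Aᴴ A)`. -/
theorem antistable_matrix_sum_frobenius_norm_eval
    (n m : ℕ) (p : Fin n → ℂ) (hp : ∀ i, 0 < (p i).re)
    (A : Fin n → Matrix (Fin m) (Fin m) ℂ) :
    (1 / (2 * Real.pi) : ℂ) *
        ∫ ω : ℝ, Matrix.trace
          ((∑ i, ((2 * ((p i).re : ℂ)) / (Complex.I * (ω : ℂ) - p i)) • A i)ᴴ *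
            (∑ i, ((2 * ((p i).re : ℂ)) / (Complex.I * (ω : ℂ) - p i)) • A i))
      = ∑ i, ∑ j, (4 * ((p i).re : ℂ) * ((p j).re : ℂ) /
          (starRingEnd ℂ (p i) + p j)) * Matrix.trace ((A i)ᴴ * A j) := by
  have hterm : ∀ i j (ω : ℝ),
      star (2 * ((p i).re : ℂ) / (I * ω - p i)) * (2 * ((p j).re : ℂ) / (I * ω - p j)) *
          trace ((A i)ᴴ * A j) =
        4 * (p i).re * (p j).re * trace ((A i)ᴴ * A j) *
          (conj (I * ω - p i)⁻¹ * (I * ω - p j)⁻¹) := fun i j ω => by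
    simp only [← starRingEnd_apply, div_eq_mul_inv, map_mul, map_ofNat, conj_ofReal]
    ring
  have hint : ∀ i j, Integrable fun ω : ℝ =>
      star (2 * ((p i).re : ℂ) / (I * ω - p i)) * (2 * ((p j).re : ℂ) / (I * ω - p j)) *
        trace ((A i)ᴴ * A j) := fun i j => by
    simpa only [hterm] using ((integrable_conj_inv_I_mul_sub_mul_inv_I_mul_sub
      (hp i).ne' (hp j).ne').const_mul _)
  simp only [trace_conjTranspose_sum_smul_mul_sum_smul]
  rw [integral_finsetSum _ fun i _ => integrable_finsetSum _ fun j _ => hint i j, Finset.mul_sum]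
  refine Finset.sum_congr rfl fun i _ => ?_
  rw [integral_finsetSum _ fun j _ => hint i j, Finset.mul_sum]
  refine Finset.sum_congr rfl fun j _ => ?_
  simp only [hterm]
  rw [integral_const_mul, integral_conj_inv_I_mul_sub_mul_inv_I_mul_sub (hp i) (hp j)]
  field_simp
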